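/- Let $\hat{W}_n = \sum_j X_{n,j}/n$ with $X_{n,j}$ independent Binomial$(n,p_j)$, $W = \sum_j p_j<\infty$. For every $\delta\in(0,1)$, $\mathbb{P}\big(W - \hat{W}_n > \sqrt{\tfrac{2W}{n}\log(1/\delta)}\big) \leq \delta$, and consequently with probability at least $1-\delta$, $W \leq \big(\sqrt{\hat{W}_n + \tfrac{\log(1/\delta)}{2n}} + \sqrt{\tfrac{\log(1/\delta)}{2n}}\big)^2$. -/

import Mathlib

/-!
For `t ≥ 0` the inequality `e^{-t} ≤ 1 - t + t²/2` bounds the moment generating function of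
`X_j ~ Bin(n, p_j)` at `-t` by `exp (n p_j (t²/2 - t))`. By independence and Chernoff's method the
partial sums of `∑ X_j` then satisfy a sub-Gaussian left-tail bound with variance factor `n W`.
Since `P(X_j ≠ 0) ≤ n p_j` is summable, Borel–Cantelli shows that almost surely only finitely many
`X_j` are nonzero, so the bound passes to the whole series. Taking `t = s / W` yields
`P(W - Ŵ_n > s) ≤ exp (-n s² / (2W))`, which is `δ` at the stated `s`. On the complementary event,
`W - Ŵ_n ≤ 2 √(W log(1/δ) / (2n))` is a quadratic inequality in `√W`, and solving it gives the
second claim.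
-/

open MeasureTheory ProbabilityTheory Real Filter Finset Topology

lemma Real.exp_neg_le_one_sub_add_sq_div_two {t : ℝ} (ht : 0 ≤ t) :
    exp (-t) ≤ 1 - t + t ^ 2 / 2 := by
  -- `(1 - t + t²/2) (1 + t + t²/2) = 1 + t⁴/4` and `1 + t + t²/2 ≤ exp t`
  have hq := quadratic_le_exp_of_nonneg ht
  rw [exp_neg, inv_le_iff_one_le_mul₀ (exp_pos t)]
  nlinarith [sq_nonneg (t - 1), pow_nonneg ht 4]

lemma Real.mul_exp_neg_add_one_sub_le {q t : ℝ} (hq : 0 ≤ q) (ht : 0 ≤ t) :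
    q * exp (-t) + (1 - q) ≤ exp (q * (t ^ 2 / 2 - t)) := by
  have := add_one_le_exp (q * (t ^ 2 / 2 - t))
  nlinarith [exp_neg_le_one_sub_add_sq_div_two ht]

lemma Real.le_sq_sqrt_add_sqrt {W w c : ℝ} (hW : 0 ≤ W) (hc : 0 ≤ c)
    (h : W - w ≤ 2 * √(W * c)) : W ≤ (√(w + c) + √c) ^ 2 := by
  have hsq : (√W - √c) ^ 2 ≤ w + c := by
    rw [sqrt_mul hW] at h
    nlinarith [sq_sqrt hW, sq_sqrt hc]
  have hle : √W ≤ √(w + c) + √c := by linarith [(abs_le.1 (abs_le_sqrt hsq)).2]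
  calc W = √W ^ 2 := (sq_sqrt hW).symm
    _ ≤ (√(w + c) + √c) ^ 2 := pow_le_pow_left₀ (sqrt_nonneg W) hle 2

section Binomial

variable {Ω : Type*} [MeasurableSpace Ω] {μ : Measure Ω} [IsProbabilityMeasure μ]
  {n : ℕ} {q : ℝ} {Y : Ω → ℕ}

lemma mgf_binomial_of_nonpos (hq : q ∈ Set.Icc (0 : ℝ) 1) (hY : Measurable Y)
    (hb : ∀ k, μ {ω | Y ω = k} = ENNReal.ofReal (n.choose k * q ^ k * (1 - q) ^ (n - k)))
    {u : ℝ} (hu : u ≤ 0) :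
    mgf (fun ω => (Y ω : ℝ)) μ u = (q * exp u + (1 - q)) ^ n := by
  have : IsProbabilityMeasure (μ.map Y) := Measure.isProbabilityMeasure_map hY.aemeasurable
  have hint : Integrable (fun k : ℕ => exp (u * k)) (μ.map Y) := by
    refine Integrable.mono' (integrable_const 1)
      measurable_from_nat.aestronglyMeasurable (ae_of_all _ fun k => ?_)
    rw [norm_of_nonneg (exp_pos _).le, exp_le_one_iff]
    exact mul_nonpos_of_nonpos_of_nonneg hu k.cast_nonneg
  have hterm : ∀ k : ℕ, (μ.map Y).real {k} • exp (u * k)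
      = n.choose k * (q * exp u) ^ k * (1 - q) ^ (n - k) := by
    intro k
    simp only [measureReal_def, Measure.map_apply hY (measurableSet_singleton k),
      Set.preimage, Set.mem_singleton_iff]
    rw [hb k, ENNReal.toReal_ofReal (by have := sub_nonneg.2 hq.2; have := hq.1; positivity),
      smul_eq_mul, mul_pow, ← exp_nat_mul]
    ring_nf
  rw [mgf, ← integral_map hY.aemeasurable measurable_from_nat.aestronglyMeasurable
    (f := fun k : ℕ => exp (u * k)), integral_countable hint]
  simp_rw [hterm]
  rw [tsum_eq_sum (s := range (n + 1)) fun k hk => by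
      rw [Nat.choose_eq_zero_of_lt (by simpa using hk)]; simp,
    add_pow]
  exact sum_congr rfl fun k _ => by ring

lemma mgf_binomial_neg_le (hq : q ∈ Set.Icc (0 : ℝ) 1) (hY : Measurable Y)
    (hb : ∀ k, μ {ω | Y ω = k} = ENNReal.ofReal (n.choose k * q ^ k * (1 - q) ^ (n - k)))
    {t : ℝ} (ht : 0 ≤ t) :
    mgf (fun ω => (Y ω : ℝ)) μ (-t) ≤ exp (n * q * (t ^ 2 / 2 - t)) := by
  rw [mgf_binomial_of_nonpos hq hY hb (neg_nonpos.2 ht), mul_assoc, exp_nat_mul]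
  exact pow_le_pow_left₀ (add_nonneg (mul_nonneg hq.1 (exp_pos _).le) (sub_nonneg.2 hq.2))
    (mul_exp_neg_add_one_sub_le hq.1 ht) n

lemma measure_binomial_ne_zero_le (hq : q ∈ Set.Icc (0 : ℝ) 1) (hY : Measurable Y)
    (hb : ∀ k, μ {ω | Y ω = k} = ENNReal.ofReal (n.choose k * q ^ k * (1 - q) ^ (n - k))) :
    μ {ω | Y ω ≠ 0} ≤ ENNReal.ofReal (n * q) := by
  have h0 : μ {ω | Y ω = 0} = ENNReal.ofReal ((1 - q) ^ n) := by simpa using hb 0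
  have hbern : 1 ≤ n * q + (1 - q) ^ n := by
    have := one_add_mul_le_pow (a := -q) (by linarith [hq.2]) n
    rw [← sub_eq_add_neg] at this
    linarith
  have hmeas : MeasurableSet {ω | Y ω = 0} := hY (measurableSet_singleton 0)
  rw [← Set.compl_ofPred, measure_compl hmeas (measure_ne_top μ _),
    measure_univ, h0, tsub_le_iff_right, ← ENNReal.ofReal_add (mul_nonneg n.cast_nonneg hq.1)
    (pow_nonneg (sub_nonneg.2 hq.2) n), ← ENNReal.ofReal_one]
  exact ENNReal.ofReal_le_ofReal hbern

end Binomial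

lemma MeasureTheory.ofReal_one_sub_le_measure_of_compl_subset {Ω : Type*} [MeasurableSpace Ω]
    {μ : Measure Ω} [IsProbabilityMeasure μ] {s t : Set Ω} {δ : ℝ} (hδ : 0 ≤ δ)
    (hs : μ s ≤ ENNReal.ofReal δ) (hst : sᶜ ⊆ t) : ENNReal.ofReal (1 - δ) ≤ μ t := by
  rw [ENNReal.ofReal_sub _ hδ, ENNReal.ofReal_one, tsub_le_iff_right]
  calc 1 = μ Set.univ := measure_univ.symm
    _ ≤ μ (t ∪ s) := measure_mono fun ω _ => (em (ω ∈ s)).elim Or.inr fun h => Or.inl (hst h)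
    _ ≤ μ t + μ s := measure_union_le t s
    _ ≤ μ t + ENNReal.ofReal δ := add_le_add_right hs _

section BinomialFamily

variable {Ω : Type*} [MeasurableSpace Ω] {μ : Measure Ω} [IsProbabilityMeasure μ]
  {p : ℕ → ℝ} {n : ℕ} {X : ℕ → Ω → ℕ}

lemma ae_eventually_eq_zero_of_binomial (hp : ∀ j, p j ∈ Set.Icc (0 : ℝ) 1) (hsum : Summable p)
    (hmeas : ∀ j, Measurable (X j))
    (hbin : ∀ j k, μ {ω | X j ω = k} =
      ENNReal.ofReal (n.choose k * p j ^ k * (1 - p j) ^ (n - k))) :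
    ∀ᵐ ω ∂μ, ∀ᶠ j in atTop, X j ω = 0 := by
  have hfin : ∑' j, μ {ω | X j ω ≠ 0} ≠ ⊤ := by
    refine ne_top_of_le_ne_top (ENNReal.ofReal_ne_top (r := ∑' j, n * p j))
      ((ENNReal.tsum_le_tsum fun j =>
        measure_binomial_ne_zero_le (hp j) (hmeas j) (hbin j)).trans_eq ?_)
    exact (ENNReal.ofReal_tsum_of_nonneg (fun j => mul_nonneg n.cast_nonneg (hp j).1)
      (hsum.mul_left _)).symm
  filter_upwards [ae_eventually_notMem hfin] with ω hω
  simpa using hω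

lemma measure_sum_range_le_le (hp : ∀ j, p j ∈ Set.Icc (0 : ℝ) 1)
    (hmeas : ∀ j, Measurable (X j)) (hindep : iIndepFun X μ)
    (hbin : ∀ j k, μ {ω | X j ω = k} =
      ENNReal.ofReal (n.choose k * p j ^ k * (1 - p j) ^ (n - k)))
    {t : ℝ} (ht : 0 ≤ t) (a : ℝ) (m : ℕ) :
    μ {ω | ∑ j ∈ range m, (X j ω : ℝ) ≤ a} ≤
      ENNReal.ofReal (exp (t * a + n * (t ^ 2 / 2 - t) * ∑ j ∈ range m, p j)) := by
  set Y : ℕ → Ω → ℝ := fun j ω => X j ω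
  have hYm : ∀ j, Measurable (Y j) := fun j => measurable_from_nat.comp (hmeas j)
  have hYindep : iIndepFun Y μ := hindep.comp _ fun _ => measurable_from_nat
  have hint : Integrable (fun ω => exp (-t * (∑ j ∈ range m, Y j) ω)) μ := by
    refine Integrable.of_bound (by fun_prop) 1 (ae_of_all _ fun ω => ?_)
    rw [norm_of_nonneg (exp_pos _).le, exp_le_one_iff, Finset.sum_apply]
    exact mul_nonpos_of_nonpos_of_nonneg (neg_nonpos.2 ht)
      (sum_nonneg fun j _ => Nat.cast_nonneg _)
  have hchernoff := measure_le_le_exp_mul_mgf a (neg_nonpos.2 ht) hint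
  rw [hYindep.mgf_sum hYm, neg_neg] at hchernoff
  have hprod :
      ∏ j ∈ range m, mgf (Y j) μ (-t) ≤ ∏ j ∈ range m, exp (n * p j * (t ^ 2 / 2 - t)) :=
    prod_le_prod (fun j _ => mgf_nonneg) fun j _ =>
      mgf_binomial_neg_le (hp j) (hmeas j) (hbin j) ht
  rw [ENNReal.le_ofReal_iff_toReal_le (measure_ne_top μ _) (exp_pos _).le]
  calc (μ {ω | ∑ j ∈ range m, (X j ω : ℝ) ≤ a}).toReal
      = μ.real {ω | (∑ j ∈ range m, Y j) ω ≤ a} := by simp [Y, measureReal_def]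
    _ ≤ exp (t * a) * ∏ j ∈ range m, exp (n * p j * (t ^ 2 / 2 - t)) :=
      hchernoff.trans (mul_le_mul_of_nonneg_left hprod (exp_pos _).le)
    _ = exp (t * a + n * (t ^ 2 / 2 - t) * ∑ j ∈ range m, p j) := by
      rw [← exp_sum, ← exp_add, mul_sum]
      congr 2
      exact sum_congr rfl fun j _ => by ring

lemma measure_tsum_le_le (hp : ∀ j, p j ∈ Set.Icc (0 : ℝ) 1) (hsum : Summable p)
    (hmeas : ∀ j, Measurable (X j)) (hindep : iIndepFun X μ)
    (hbin : ∀ j k, μ {ω | X j ω = k} =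
      ENNReal.ofReal (n.choose k * p j ^ k * (1 - p j) ^ (n - k)))
    {t : ℝ} (ht : 0 ≤ t) (a : ℝ) :
    μ {ω | ∑' j, (X j ω : ℝ) ≤ a} ≤
      ENNReal.ofReal (exp (t * a + n * (t ^ 2 / 2 - t) * ∑' j, p j)) := by
  have hmono : ∀ m,
      μ {ω | ∑' j, (X j ω : ℝ) ≤ a} ≤ μ {ω | ∑ j ∈ range m, (X j ω : ℝ) ≤ a} := by
    intro m
    refine measure_mono_ae ?_
    filter_upwards [ae_eventually_eq_zero_of_binomial hp hsum hmeas hbin] with ω hω hle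
    obtain ⟨J, hJ⟩ := eventually_atTop.1 hω
    have hs : Summable fun j => (X j ω : ℝ) :=
      summable_of_ne_finset_zero (s := range J) fun j hj => by simp [hJ j (by simpa using hj)]
    exact (hs.sum_le_tsum _ fun j _ => Nat.cast_nonneg _).trans hle
  have hlim : Tendsto (fun m => ENNReal.ofReal (exp (t * a + n * (t ^ 2 / 2 - t) *
      ∑ j ∈ range m, p j))) atTop (𝓝 (ENNReal.ofReal (exp (t * a + n * (t ^ 2 / 2 - t) *
      ∑' j, p j)))) :=
    (ENNReal.continuous_ofReal.tendsto _).comp ((continuous_exp.tendsto _).comp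
      (tendsto_const_nhds.add (hsum.hasSum.tendsto_sum_nat.const_mul _)))
  exact ge_of_tendsto' hlim fun m =>
    (hmono m).trans (measure_sum_range_le_le hp hmeas hindep hbin ht a m)

lemma measure_sub_tsum_div_gt_le (hp : ∀ j, p j ∈ Set.Icc (0 : ℝ) 1) (hsum : Summable p)
    (hmeas : ∀ j, Measurable (X j)) (hindep : iIndepFun X μ)
    (hbin : ∀ j k, μ {ω | X j ω = k} =
      ENNReal.ofReal (n.choose k * p j ^ k * (1 - p j) ^ (n - k)))
    (hn : 0 < n) (hW : 0 < ∑' j, p j) {s : ℝ} (hs : 0 ≤ s) :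
    μ {ω | ∑' j, p j - (∑' j, (X j ω : ℝ)) / n > s} ≤
      ENNReal.ofReal (exp (-(n * s ^ 2) / (2 * ∑' j, p j))) := by
  set W := ∑' j, p j
  have hn0 : (0 : ℝ) < n := by exact_mod_cast hn
  -- Chernoff's method at the optimal parameter `t = s / W`
  have hbound := measure_tsum_le_le hp hsum hmeas hindep hbin (div_nonneg hs hW.le) (n * (W - s))
  refine (measure_mono fun ω hω => ?_).trans (hbound.trans_eq ?_)
  · simp only [Set.mem_ofPred_eq] at hω ⊢
    rw [← div_le_iff₀' hn0]
    linarith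
  · congr 2
    field_simp
    ring

end BinomialFamily

theorem stmt
    {Ω : Type*} [MeasurableSpace Ω] (μ : Measure Ω) [IsProbabilityMeasure μ]
    (p : ℕ → ℝ) (hp : ∀ j, p j ∈ Set.Ioo (0 : ℝ) 1) (hsum : Summable p)
    (n : ℕ) (X : ℕ → Ω → ℕ)
    (hmeas : ∀ j, Measurable (X j))
    (hindep : iIndepFun X μ)
    (hbin : ∀ j k, μ {ω | X j ω = k} =
      ENNReal.ofReal ((n.choose k : ℝ) * p j ^ k * (1 - p j) ^ (n - k)))
    (W : ℝ) (hW : ∑' j, p j = W) (hn : 1 ≤ n)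
    (δ : ℝ) (hδ : δ ∈ Set.Ioo (0 : ℝ) 1) :
    μ {ω | W - (∑' j, (X j ω : ℝ)) / n > Real.sqrt (2 * W / n * Real.log (1 / δ))}
      ≤ ENNReal.ofReal δ ∧
    ENNReal.ofReal (1 - δ) ≤
      μ {ω | W ≤ (Real.sqrt ((∑' j, (X j ω : ℝ)) / n + Real.log (1 / δ) / (2 * n))
          + Real.sqrt (Real.log (1 / δ) / (2 * n))) ^ 2} := by
  obtain ⟨hδ0, hδ1⟩ := hδ
  subst hW
  have hW0 : 0 < ∑' j, p j := (hp 0).1.trans_le (hsum.le_tsum 0 fun j _ => (hp j).1.le)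
  have hL : 0 ≤ log (1 / δ) := log_nonneg (by rw [le_div_iff₀ hδ0]; linarith)
  have hn0 : (0 : ℝ) < n := by exact_mod_cast hn
  have htail := measure_sub_tsum_div_gt_le (fun j => Set.Ioo_subset_Icc_self (hp j)) hsum hmeas
    hindep hbin hn hW0 (sqrt_nonneg (2 * (∑' j, p j) / n * log (1 / δ)))
  rw [sq_sqrt (by positivity), show -(n * (2 * (∑' j, p j) / n * log (1 / δ))) /
    (2 * ∑' j, p j) = log δ by field_simp; rw [one_div, log_inv, neg_neg], exp_log hδ0] at htail
  refine ⟨htail, ofReal_one_sub_le_measure_of_compl_subset hδ0.le htail fun ω hω => ?_⟩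
  simp only [Set.mem_compl_iff, Set.mem_ofPred_eq, not_lt] at hω
  refine le_sq_sqrt_add_sqrt hW0.le (by positivity) (hω.trans_eq ?_)
  rw [show 2 * (∑' j, p j) / n * log (1 / δ) = 2 ^ 2 * ((∑' j, p j) * (log (1 / δ) / (2 * n))) by
    field_simp, sqrt_mul (by positivity), sqrt_sq zero_le_two]
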